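/- arXiv:1012.0964 — 5 statements merged into one kernel-verified Lean document; each statement's English description precedes it below -/
import Mathlib

section
/- Generalised Wilson's theorem: let p be a prime and k a positive integer with p^k ≠ 4. If x and y are nonnegative integers with x ≡ y (mod p^k), then Γ_p(x) ≡ Γ_p(y) (mod p^k). -/
open Finset

/-!
Splitting `[0, x + p^k)` at `x` gives `Γ_p(x + p^k) = Γ_p(x) · (-1)^{p^k} · P`, where `P` is the
product of the integers prime to `p` in a block of `p^k` consecutive integers. Modulo `p^k`, `P` is
the product of all units of `ZMod (p^k)`, which is the product of the square roots of `1`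
(the others cancel against their inverses). For odd `p` the unit group is cyclic, so these are
`±1` and `P = -1`; for `p = 2`, `k ≥ 3` they form a Klein four-group and `P = 1`; for `p^k = 2`
trivially `P = 1`. Apart from `p^k = 4` this always gives `P = (-1)^{p^k}`, so `Γ_p` is
`p^k`-periodic modulo `p^k`.
-/

/-- The `p`-adic gamma function on the natural numbers:
`Γ_p(k) = (-1)^k ∏_{t < k, gcd(t,p) = 1} t`. -/
def padicGammaNat (p k : ℕ) : ℤ :=
  (-1) ^ k * ∏ t ∈ (range k).filter (fun t => Nat.Coprime t p), (t : ℤ)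

theorem prod_univ_eq_prod_filter_mul_self_eq_one {G : Type*} [CommGroup G] [Fintype G]
    [DecidableEq G] : ∏ g : G, g = ∏ g ∈ univ.filter (fun g => g * g = 1), g := by
  rw [← prod_filter_mul_prod_filter_not univ (fun g : G => g * g = 1), mul_eq_left]
  refine prod_involution (fun g _ => g⁻¹) (fun g _ => mul_inv_cancel g) ?_ ?_
    (fun g _ => inv_inv g)
  · intro g hg _ hinv
    simp only [mem_filter, mem_univ, true_and] at hg
    exact hg (by nth_rewrite 2 [← hinv]; exact mul_inv_cancel g)
  · intro g hg
    simp only [mem_filter, mem_univ, true_and] at hg ⊢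
    rwa [← mul_inv_rev, inv_eq_one]

theorem prod_klein_four {G : Type*} [CommGroup G] [DecidableEq G] {a b : G}
    (ha : a * a = 1) (hb : b * b = 1) (ha1 : a ≠ 1) (hb1 : b ≠ 1) (hab : a ≠ b) :
    ∏ g ∈ {1, a, b, a * b}, g = 1 := by
  have hab1 : a * b ≠ 1 := fun h =>
    hab (by rw [eq_inv_of_mul_eq_one_left h, inv_eq_of_mul_eq_one_right hb])
  rw [prod_insert, prod_insert, prod_pair, one_mul, ← mul_assoc, mul_mul_mul_comm, ha, hb,
    one_mul]
  all_goals simp [ha1, hb1, hab, ha1.symm, hb1.symm, hab1.symm]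

theorem ZMod.prod_units_of_isCyclic {n : ℕ} [NeZero n] (hn : 2 < n) [IsCyclic (ZMod n)ˣ] :
    ∏ u : (ZMod n)ˣ, u = -1 := by
  have : Fact (2 < n) := ⟨hn⟩
  have hne : (-1 : (ZMod n)ˣ) ≠ 1 := fun h => ZMod.neg_one_ne_one (congrArg Units.val h)
  have hS : univ.filter (fun u : (ZMod n)ˣ => u * u = 1) = {-1, 1} := by
    symm
    refine eq_of_subset_of_card_le (fun u hu => ?_) ?_
    · simp only [mem_insert, mem_singleton] at hu
      rcases hu with rfl | rfl <;> simp
    · rw [card_pair hne]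
      convert IsCyclic.card_pow_eq_one_le (α := (ZMod n)ˣ) two_pos using 3
      simp [sq]
  rw [prod_univ_eq_prod_filter_mul_self_eq_one, hS, prod_pair hne, mul_one]

theorem Int.exists_eq_two_pow_mul_add_one_or_sub_one {k : ℕ} {n : ℤ}
    (h : 2 ^ (k + 2) ∣ n * n - 1) :
    ∃ j, n = 2 ^ (k + 1) * j + 1 ∨ n = 2 ^ (k + 1) * j - 1 := by
  have hodd : Odd n := by
    have h2 : Even (n * n - 1) := even_iff_two_dvd.mpr ((dvd_pow_self 2 (by omega)).trans h)
    exact (Int.odd_mul.mp (by simpa [Int.even_sub] using h2)).1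
  obtain ⟨m, rfl⟩ := hodd
  have hm : 2 ^ k ∣ m * (m + 1) := by
    rw [show (2 * m + 1) * (2 * m + 1) - 1 = m * (m + 1) * 2 ^ 2 by ring, pow_add] at h
    exact (mul_dvd_mul_iff_right (by norm_num)).mp h
  by_cases h2m : 2 ∣ m
  · obtain ⟨j, hj⟩ := Int.prime_two.pow_dvd_of_dvd_mul_right k
      (fun h2 => by omega) hm
    exact ⟨j, Or.inl (by rw [hj]; ring)⟩
  · obtain ⟨j, hj⟩ := Int.prime_two.pow_dvd_of_dvd_mul_left k h2m hm
    exact ⟨j, Or.inr (by rw [show m = 2 ^ k * j - 1 by linarith]; ring)⟩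

theorem ZMod.mul_self_eq_one_two_pow {k : ℕ} {u : ZMod (2 ^ (k + 2))} (h : u * u = 1) :
    u = 1 ∨ u = -1 ∨ u = 1 + 2 ^ (k + 1) ∨ u = -(1 + 2 ^ (k + 1)) := by
  obtain ⟨n, rfl⟩ := ZMod.intCast_surjective u
  have hdvd : (2 : ℤ) ^ (k + 2) ∣ n * n - 1 := by
    have := (ZMod.intCast_zmod_eq_zero_iff_dvd (n * n - 1) (2 ^ (k + 2))).mp
      (by push_cast; rw [h, sub_self])
    exact_mod_cast this
  have h2 : (2 : ZMod (2 ^ (k + 2))) ^ (k + 1) * 2 = 0 := by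
    rw [← pow_succ]; exact_mod_cast ZMod.natCast_self (2 ^ (k + 2))
  obtain ⟨j, rfl | rfl⟩ := Int.exists_eq_two_pow_mul_add_one_or_sub_one hdvd <;>
    obtain ⟨i, rfl | rfl⟩ := Int.even_or_odd' j <;> push_cast
  · exact Or.inl (by linear_combination (i : ZMod (2 ^ (k + 2))) * h2)
  · exact Or.inr (Or.inr (Or.inl (by linear_combination (i : ZMod (2 ^ (k + 2))) * h2)))
  · exact Or.inr (Or.inl (by linear_combination (i : ZMod (2 ^ (k + 2))) * h2))
  · exact Or.inr (Or.inr (Or.inr (by linear_combination ((i : ZMod (2 ^ (k + 2))) + 1) * h2)))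

theorem ZMod.prod_Ico_filter_coprime_eq_prod_units {n : ℕ} [NeZero n] (x : ℕ) :
    ∏ t ∈ (Ico x (x + n)).filter (·.Coprime n), (t : ZMod n) =
      ∏ u : (ZMod n)ˣ, (u : ZMod n) := by
  refine prod_bij' (fun t ht => ZMod.unitOfCoprime t (mem_filter.mp ht).2)
    (fun u _ => x + ((u : ZMod n) - (x : ZMod n)).val) (fun _ _ => mem_univ _) ?_ ?_ ?_ ?_
  · intro u _
    have hcast : ((x + ((u : ZMod n) - (x : ZMod n)).val : ℕ) : ZMod n) = u := by
      push_cast; rw [ZMod.natCast_val, ZMod.cast_id]; ring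
    refine mem_filter.mpr ⟨mem_Ico.mpr ⟨Nat.le_add_right _ _, ?_⟩, ?_⟩
    · have := ZMod.val_lt ((u : ZMod n) - (x : ZMod n)); omega
    · exact (ZMod.isUnit_iff_coprime _ n).mp (by rw [hcast]; exact u.isUnit)
  · intro t ht
    obtain ⟨hxt, htn⟩ := mem_Ico.mp (mem_filter.mp ht).1
    simp only [ZMod.coe_unitOfCoprime]
    rw [← Nat.cast_sub hxt, ZMod.val_cast_of_lt (by omega)]
    omega
  · intro u _
    ext
    simp only [ZMod.coe_unitOfCoprime]
    push_cast; rw [ZMod.natCast_val, ZMod.cast_id]; ring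
  · intro t _
    rfl

-- The square roots of `1` form the Klein four-group `{±1, ±(1 + 2^(k+2))}`.
theorem ZMod.prod_units_two_pow (k : ℕ) : ∏ u : (ZMod (2 ^ (k + 3)))ˣ, u = 1 := by
  have h0 : (2 : ZMod (2 ^ (k + 3))) ^ (k + 3) = 0 := by exact_mod_cast ZMod.natCast_self _
  have h1 : (2 : ZMod (2 ^ (k + 3))) ^ (k + 2) ≠ 0 := by
    exact_mod_cast (ZMod.natCast_eq_zero_iff _ _).not.mpr
      ((Nat.pow_dvd_pow_iff_le_right one_lt_two).not.mpr (by omega))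
  have hc : (1 + 2 ^ (k + 2) : ZMod (2 ^ (k + 3))) * (1 + 2 ^ (k + 2)) = 1 := by
    linear_combination (1 + (2 : ZMod (2 ^ (k + 3))) ^ (k + 1)) * h0
  let c := Units.mkOfMulEqOne _ _ hc
  -- Each coincidence among `1, -1, c` would force `2 ^ (k + 2) = 0`.
  have hneg : (-1 : (ZMod (2 ^ (k + 3)))ˣ) ≠ 1 := by
    rw [Ne, Units.ext_iff, Units.val_neg, Units.val_one]
    exact fun h => h1 (by linear_combination (-(2 : ZMod (2 ^ (k + 3))) ^ (k + 1)) * h)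
  have hc1 : c ≠ 1 := by
    rw [Ne, Units.ext_iff, Units.val_mkOfMulEqOne, Units.val_one]
    exact fun h => h1 (by linear_combination h)
  have hc2 : (-1 : (ZMod (2 ^ (k + 3)))ˣ) ≠ c := by
    rw [Ne, Units.ext_iff, Units.val_neg, Units.val_one, Units.val_mkOfMulEqOne]
    exact fun h => h1 (by
      linear_combination (-(2 : ZMod (2 ^ (k + 3))) ^ (k + 1)) * h - 2 ^ k * h0)
  have hS : univ.filter (fun u : (ZMod (2 ^ (k + 3)))ˣ => u * u = 1) = {1, -1, c, -1 * c} := by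
    ext u
    simp only [mem_filter, mem_univ, true_and, mem_insert, mem_singleton, Units.ext_iff,
      Units.val_mul, Units.val_one, Units.val_neg, Units.val_mkOfMulEqOne, c]
    constructor
    · intro h
      rcases ZMod.mul_self_eq_one_two_pow (k := k + 1) h with h | h | h | h <;> simp [h]
    · rintro (h | h | h | h) <;> rw [h] <;> first | linear_combination hc | simp
  rw [prod_univ_eq_prod_filter_mul_self_eq_one, hS]
  exact prod_klein_four (by simp) (Units.ext hc) hneg hc1 hc2

theorem ZMod.prod_units_prime_pow {p k : ℕ} [Fact p.Prime] (hk : 0 < k) (hpk : p ^ k ≠ 4) :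
    ∏ u : (ZMod (p ^ k))ˣ, (u : ZMod (p ^ k)) = (-1) ^ (p ^ k) := by
  have hp : p.Prime := Fact.out
  rw [← Units.coe_prod]
  rcases eq_or_ne p 2 with rfl | hp2
  · match k, hk, hpk with
    | 1, _, _ => rfl
    | 2, _, hpk => exact absurd rfl hpk
    | k + 3, _, _ =>
      rw [prod_units_two_pow, (Nat.even_pow.mpr ⟨even_two, by omega⟩).neg_one_pow,
        Units.val_one]
  · have := ZMod.isCyclic_units_of_prime_pow p hp hp2 k
    have h2 : 2 < p ^ k :=
      (lt_of_le_of_ne hp.two_le (Ne.symm hp2)).trans_le (Nat.le_self_pow hk.ne' p)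
    rw [prod_units_of_isCyclic h2, (hp.odd_of_ne_two hp2).pow.neg_one_pow, Units.val_neg,
      Units.val_one]

theorem padicGammaNat_add (p x n : ℕ) :
    padicGammaNat p (x + n) =
      padicGammaNat p x *
        ((-1) ^ n * ∏ t ∈ (Ico x (x + n)).filter (·.Coprime p), (t : ℤ)) := by
  simp only [padicGammaNat, prod_filter]
  rw [← prod_range_mul_prod_Ico _ (Nat.le_add_right x n)]
  ring

theorem padicGammaNat_periodic {p k : ℕ} [Fact p.Prime] (hk : 0 < k) (hpk : p ^ k ≠ 4) :
    Function.Periodic (fun x => (padicGammaNat p x : ZMod (p ^ k))) (p ^ k) := by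
  intro x
  have hblock : ∏ t ∈ (Ico x (x + p ^ k)).filter (·.Coprime p), (t : ZMod (p ^ k)) =
      (-1) ^ (p ^ k) := by
    rw [filter_congr (fun t _ => (Nat.coprime_pow_right_iff hk t p).symm),
      ZMod.prod_Ico_filter_coprime_eq_prod_units, ZMod.prod_units_prime_pow hk hpk]
  simp only [padicGammaNat_add, Int.cast_mul, Int.cast_pow, Int.cast_neg, Int.cast_one,
    Int.cast_prod, Int.cast_natCast, hblock]
  rw [← pow_add, ← two_mul, pow_mul, neg_one_sq, one_pow, mul_one]

/-- Generalised Wilson's theorem: if `x ≡ y (mod p^k)` and `p^k ≠ 4`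
then `Γ_p(x) ≡ Γ_p(y) (mod p^k)`. -/
theorem padic_gamma_generalised_wilson (p : ℕ) (hp : p.Prime) (k : ℕ) (hk : 0 < k)
    (hpk : p ^ k ≠ 4) (x y : ℕ) (hxy : (x : ℤ) ≡ (y : ℤ) [ZMOD ((p : ℤ) ^ k)]) :
    padicGammaNat p x ≡ padicGammaNat p y [ZMOD ((p : ℤ) ^ k)] := by
  have := Fact.mk hp
  have hper := padicGammaNat_periodic (p := p) hk hpk
  have hmod : x % p ^ k = y % p ^ k := Int.natCast_modEq_iff.mp (by exact_mod_cast hxy)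
  rw [← Nat.cast_pow, ← ZMod.intCast_eq_intCast_iff]
  exact (hper.map_mod_nat x).symm.trans (hmod ▸ hper.map_mod_nat y)
end

section
/- For n ≥ 3 and an integer i with 1 ≤ i ≤ n-1, the 3-adic gamma function satisfies Γ_3(⟨3^i/(3^n - 1)⟩) ≡ 13 (mod 27) if i = 1, and Γ_3(⟨3^i/(3^n - 1)⟩) ≡ 1 (mod 27) if i > 1, where the argument is the element of ℤ_3 given by the fractional part 3^i/(3^n - 1) ∈ ℤ_3. -/
/-!
Since `3 ^ n * x ≡ 0 (mod 27)`, the hypothesis gives `x ≡ -3 ^ i (mod 27)`. As `ℕ` is dense in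
`ℤ_[3]` and `Γ_3` is continuous, `Γ_3(x) ≡ Γ_3(b) (mod 27)` for some natural `b ≡ -3 ^ i`.
On `ℕ`, `Γ_3` is `27`-periodic mod `27`: shifting the argument by `27` multiplies it by
`Γ_3(27) ≡ 1`. Hence `Γ_3(x)` is congruent to `Γ_3(24) ≡ 13`, `Γ_3(18) ≡ 1` or `Γ_3(0) = 1`
according as `i = 1`, `i = 2` or `i ≥ 3`.
-/

open Finset

@[simp]
theorem padicGammaNat_zero (p : ℕ) : padicGammaNat p 0 = 1 := by
  simp [padicGammaNat]

theorem padicGammaNat_succ (p k : ℕ) :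
    padicGammaNat p (k + 1) = -padicGammaNat p k * if k.Coprime p then (k : ℤ) else 1 := by
  unfold padicGammaNat
  rw [range_add_one, filter_insert]
  split_ifs with h
  · rw [prod_insert (by simp)]
    ring
  · ring

theorem padicGammaNat_add_of_dvd {p m : ℕ} (hpm : p ∣ m) (a : ℕ) :
    (padicGammaNat p (a + m) : ZMod m) = padicGammaNat p m * padicGammaNat p a := by
  induction a with
  | zero => simp
  | succ a ih =>
    obtain ⟨c, rfl⟩ := hpm
    have hcop : (a + p * c).Coprime p ↔ a.Coprime p := Nat.coprime_add_mul_left_left a p c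
    rw [add_right_comm, padicGammaNat_succ, padicGammaNat_succ]
    have hpc : (p : ZMod (p * c)) * c = 0 := by exact_mod_cast ZMod.natCast_self (p * c)
    push_cast [hcop, ih, hpc, add_zero]
    ring

theorem padicGammaNat_mod {p m : ℕ} (hpm : p ∣ m) (hm : (padicGammaNat p m : ZMod m) = 1)
    (a : ℕ) : (padicGammaNat p a : ZMod m) = padicGammaNat p (a % m) := by
  conv_lhs => rw [← Nat.mod_add_div a m]
  induction a / m with
  | zero => simp
  | succ q ih => rw [mul_add_one, ← add_assoc, padicGammaNat_add_of_dvd hpm, hm, one_mul, ih]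

theorem ZMod.natCast_pow_eq_zero {p k n : ℕ} (hkn : k ≤ n) : (p : ZMod (p ^ k)) ^ n = 0 := by
  rw [← Nat.cast_pow, ZMod.natCast_eq_zero_iff]
  exact pow_dvd_pow p hkn

namespace PadicInt

variable {p : ℕ} [Fact p.Prime]

theorem pow_dvd_iff_toZModPow_eq_zero (k : ℕ) (y : ℤ_[p]) :
    (p : ℤ_[p]) ^ k ∣ y ↔ toZModPow k y = 0 := by
  rw [← Ideal.mem_span_singleton, ← ker_toZModPow, RingHom.mem_ker]

theorem toZModPow_eq_iff_dist_le (k : ℕ) (y z : ℤ_[p]) :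
    toZModPow k y = toZModPow k z ↔ dist y z ≤ (p : ℝ) ^ (-k : ℤ) := by
  rw [← sub_eq_zero, ← map_sub, ← pow_dvd_iff_toZModPow_eq_zero, dist_eq_norm,
    norm_le_pow_iff_mem_span_pow, Ideal.mem_span_singleton]

theorem exists_natCast_toZModPow_eq_of_continuous {G : ℤ_[p] → ℤ_[p]} (hG : Continuous G)
    (k : ℕ) (x : ℤ_[p]) :
    ∃ b : ℕ, (b : ZMod (p ^ k)) = toZModPow k x ∧ toZModPow k (G b) = toZModPow k (G x) := by
  have hε : (0 : ℝ) < (p : ℝ) ^ (-k : ℤ) := zpow_pos (by exact_mod_cast (Fact.out : p.Prime).pos) _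
  obtain ⟨δ, hδ, hGδ⟩ := Metric.continuousAt_iff.mp hG.continuousAt _ hε
  obtain ⟨b, hb⟩ := denseRange_natCast.exists_dist_lt x (lt_min hδ hε)
  rw [dist_comm] at hb
  refine ⟨b, ?_, ?_⟩
  · rw [← map_natCast (toZModPow k), toZModPow_eq_iff_dist_le]
    exact (hb.trans_le (min_le_right _ _)).le
  · rw [toZModPow_eq_iff_dist_le]
    exact (hGδ (hb.trans_le (min_le_left _ _))).le

end PadicInt

open PadicInt

theorem padic_gamma_fractional_values_general (G : ℤ_[3] → ℤ_[3]) (hG : Continuous G)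
    (hGnat : ∀ k : ℕ, G (k : ℤ_[3]) = ((padicGammaNat 3 k : ℤ) : ℤ_[3]))
    (n : ℕ) (hn : 3 ≤ n) (i : ℕ)
    (x : ℤ_[3]) (hx : ((3 : ℤ_[3]) ^ n - 1) * x = 3 ^ i) :
    (i = 1 → (27 : ℤ_[3]) ∣ G x - 13) ∧ (1 < i → (27 : ℤ_[3]) ∣ G x - 1) := by
  have h3n : (3 : ZMod 27) ^ n = 0 := by simpa using ZMod.natCast_pow_eq_zero (p := 3) (k := 3) hn
  have hx27 : toZModPow 3 x = -3 ^ i := by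
    have h := congrArg (toZModPow (p := 3) 3) hx
    simp only [map_mul, map_sub, map_pow, map_one, map_ofNat, h3n] at h
    linear_combination -h
  obtain ⟨b, hbx, hGb⟩ := exists_natCast_toZModPow_eq_of_continuous hG 3 x
  have hGx : toZModPow 3 (G x) = padicGammaNat 3 (-(3 : ZMod 27) ^ i).val := by
    rw [← hGb, hGnat, map_intCast, padicGammaNat_mod (m := 27) (by norm_num) (by decide), ← hx27,
      ← hbx, ZMod.val_natCast]
  have h27 : ∀ y : ℤ_[3], (27 : ℤ_[3]) ∣ y ↔ toZModPow 3 y = 0 := fun y => by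
    rw [← pow_dvd_iff_toZModPow_eq_zero]; norm_num
  simp only [h27, map_sub, hGx, map_ofNat, map_one, sub_eq_zero]
  refine ⟨?_, fun hi => ?_⟩
  · rintro rfl
    decide
  · obtain ⟨j, rfl⟩ : ∃ j, i = j + 2 := ⟨i - 2, by omega⟩
    rcases j with _ | j
    · decide
    · rw [show j + 1 + 2 = j + 3 by ring, pow_add, show (3 : ZMod 27) ^ 3 = 0 by decide]
      simp

/-- For `n ≥ 3` and `1 ≤ i ≤ n-1`, the 3-adic gamma function (the continuous
extension `G` of `padicGammaNat 3` to `ℤ_3`) satisfies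
`Γ_3(⟨3^i/(3^n-1)⟩) ≡ 13 (mod 27)` if `i = 1` and `≡ 1 (mod 27)` if `i > 1`.
Here `⟨3^i/(3^n-1)⟩ = 3^i/(3^n-1)` is the element `x` of `ℤ_3` with
`(3^n - 1) x = 3^i`. -/
theorem padic_gamma_fractional_values (G : ℤ_[3] → ℤ_[3]) (hG : Continuous G)
    (hGnat : ∀ k : ℕ, G (k : ℤ_[3]) = ((padicGammaNat 3 k : ℤ) : ℤ_[3]))
    (n : ℕ) (hn : 3 ≤ n) (i : ℕ) (hi1 : 1 ≤ i) (hi2 : i ≤ n - 1)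
    (x : ℤ_[3]) (hx : ((3 : ℤ_[3]) ^ n - 1) * x = 3 ^ i) :
    (i = 1 → (27 : ℤ_[3]) ∣ G x - 13) ∧ (1 < i → (27 : ℤ_[3]) ∣ G x - 1) :=
  padic_gamma_fractional_values_general G hG hGnat n hn i x hx
end

section
/- For q = p^n and a ∈ F_q, the Kloosterman sum satisfies K_q(a) ≡ -Σ_{j=1}^{q-2} g(j)² ω^j(a) (mod q) in the ring of integers of ℚ_p(ξ,ζ). -/
open Finset

/-- The Kloosterman sum `K_q(a) = Σ_{x ∈ F_q} ζ^{Tr(x⁻¹ + a x)}` (with `0⁻¹ = 0`),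
with values in a ring `R` containing the primitive `p`-th root of unity `ζ`. -/
noncomputable def KloostermanR (p : ℕ) (F R : Type) [Field F] [Fintype F]
    [Algebra (ZMod p) F] [CommRing R] (ζ : R) (a : F) : R :=
  ∑ x : F, ζ ^ (Algebra.trace (ZMod p) F (x⁻¹ + a * x)).val

/-- The Gauss sum `g(j) = τ(ω^{-j}) = -Σ_{x ∈ F_q} ω^{-j}(x) ζ^{Tr(x)}`,
where `ω` is the Teichmüller character; for `1 ≤ j ≤ q-2` one has
`ω^{-j}(x) = ω(x)^{q-1-j}` (and `ω(0) = 0`). -/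
noncomputable def gaussG (p : ℕ) (F R : Type) [Field F] [Fintype F]
    [Algebra (ZMod p) F] [CommRing R] (ζ : R) (ω : F →*₀ R) (j : ℕ) : R :=
  -∑ x : F, ω x ^ (Fintype.card F - 1 - j) * ζ ^ (Algebra.trace (ZMod p) F x).val

/-!
Expanding `g(j)²` as a double sum over `x, y` and summing over `0 ≤ j < q - 1` first, the
orthogonality of the characters `ω⁻ʲ` (which holds because `ω` is injective) keeps exactly the
pairs with `x * y = a`. For `a ≠ 0` this gives `∑_{j=0}^{q-2} g(j)² ω(a)ʲ = (q - 1) (K(a) - 1)`,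
and since `g(0) = 1` the congruence is in fact the identity
`K(a) + ∑_{j=1}^{q-2} g(j)² ω(a)ʲ = q (K(a) - 1)`. For `a = 0` both `K(0)` and all `ω(0)ʲ` vanish.
-/

theorem geom_sum_eq_zero_of_pow_eq_one {R : Type*} [CommRing R] [IsDomain R] {z : R} {m : ℕ}
    (hz : z ^ m = 1) (hz₁ : z ≠ 1) : ∑ j ∈ range m, z ^ j = 0 := by
  have h := geom_sum_mul z m
  rw [hz, sub_self] at h
  exact (mul_eq_zero.mp h).resolve_right (sub_ne_zero.mpr hz₁)

theorem Fintype.sum_ite_eq_zero_eq_sub {ι M : Type*} [Fintype ι] [DecidableEq ι] [AddCommGroup M]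
    (i : ι) (f : ι → M) : ∑ x, (if x = i then 0 else f x) = ∑ x, f x - f i := by
  rw [eq_sub_iff_add_eq, ← Fintype.sum_ite_eq' i f, ← sum_add_distrib]
  refine Finset.sum_congr rfl fun x _ => ?_
  split_ifs <;> simp [*]

section FiniteField

variable {F R : Type*} [Field F] [Fintype F] [CommRing R] [IsDomain R]

theorem FiniteField.pow_card_sub_one_sub_eq_inv_pow {v : F} (hv : v ≠ 0) {j : ℕ}
    (hj : j ≤ Fintype.card F - 1) : v ^ (Fintype.card F - 1 - j) = v⁻¹ ^ j := by
  rw [pow_sub₀ v hv hj, FiniteField.pow_card_sub_one_eq_one v hv, one_mul, inv_pow]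

/-- The solutions of `x * y = a` are the `(t⁻¹, a * t)` with `t ≠ 0`. -/
theorem FiniteField.sum_sum_ite_mul_eq [DecidableEq F] {M : Type*} [AddCommGroup M] {a : F}
    (ha : a ≠ 0) (f : F → F → M) :
    ∑ x, ∑ y, (if x * y = a then f x y else 0) = ∑ t, f t⁻¹ (a * t) - f 0 0 := by
  have hfiber (x : F) : ∑ y, (if x * y = a then f x y else 0)
      = if x = 0 then 0 else f x (x⁻¹ * a) := by
    split_ifs with hx
    · simp [hx, ha.symm]
    · simp_rw [← eq_inv_mul_iff_mul_eq₀ hx]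
      exact Fintype.sum_ite_eq' _ _
  simp_rw [hfiber, Fintype.sum_ite_eq_zero_eq_sub]
  rw [← Equiv.sum_comp (Equiv.inv F)]
  simp [mul_comm a]

noncomputable def kloostermanSum (ψ : AddChar F R) (a : F) : R :=
  ∑ x, ψ (x⁻¹ + a * x)

/-- For `j < q - 1` this is the Gauss sum of the character `ω⁻ʲ`. -/
noncomputable def gaussSumInvPow (ω : F →*₀ R) (ψ : AddChar F R) (j : ℕ) : R :=
  ∑ x, ω x ^ (Fintype.card F - 1 - j) * ψ x

variable (ω : F →*₀ R) {ψ : AddChar F R}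

theorem kloostermanSum_zero (hψ : ψ ≠ 1) : kloostermanSum ψ 0 = 0 := by
  simp only [kloostermanSum, zero_mul, add_zero]
  exact (Equiv.sum_comp (Equiv.inv F) ψ).trans (AddChar.sum_eq_zero_of_ne_one hψ)

theorem gaussSumInvPow_zero (hψ : ψ ≠ 1) : gaussSumInvPow ω ψ 0 = -1 := by
  classical
  have hterm (x : F) : ω x ^ (Fintype.card F - 1) * ψ x = if x = 0 then 0 else ψ x := by
    split_ifs with hx
    · rw [hx, map_zero, zero_pow (Nat.sub_ne_zero_of_lt Fintype.one_lt_card), zero_mul]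
    · rw [← map_pow, FiniteField.pow_card_sub_one_eq_one x hx, map_one, one_mul]
  simp_rw [gaussSumInvPow, Nat.sub_zero, hterm]
  rw [Fintype.sum_ite_eq_zero_eq_sub, AddChar.sum_eq_zero_of_ne_one hψ, AddChar.map_zero_eq_one,
    zero_sub]

variable {ω} (hω : Function.Injective ω)
include hω

theorem sum_range_pow_map_eq_ite [DecidableEq F] {c : F} (hc : c ≠ 0) :
    ∑ j ∈ range (Fintype.card F - 1), ω c ^ j
      = if c = 1 then ((Fintype.card F - 1 : ℕ) : R) else 0 := by
  split_ifs with h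
  · simp [h]
  · refine geom_sum_eq_zero_of_pow_eq_one ?_ fun h' => h (hω (h'.trans (map_one ω).symm))
    rw [← map_pow, FiniteField.pow_card_sub_one_eq_one c hc, map_one]

theorem sum_range_pow_sub_mul_pow [DecidableEq F] {a : F} (ha : a ≠ 0) (v : F) :
    ∑ j ∈ range (Fintype.card F - 1), ω v ^ (Fintype.card F - 1 - j) * ω a ^ j
      = if v = a then ((Fintype.card F - 1 : ℕ) : R) else 0 := by
  by_cases hv : v = 0
  · subst hv
    rw [if_neg (Ne.symm ha)]
    refine sum_eq_zero fun j hj => ?_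
    rw [map_zero, zero_pow (Nat.sub_ne_zero_of_lt (mem_range.mp hj)), zero_mul]
  · calc _ = ∑ j ∈ range (Fintype.card F - 1), ω (a * v⁻¹) ^ j := by
          refine sum_congr rfl fun j hj => ?_
          rw [← map_pow, FiniteField.pow_card_sub_one_sub_eq_inv_pow hv (mem_range.mp hj).le,
            map_pow, map_mul, mul_pow, mul_comm]
      _ = _ := by
          rw [sum_range_pow_map_eq_ite hω (mul_ne_zero ha (inv_ne_zero hv))]
          exact if_congr ((mul_inv_eq_one₀ hv).trans eq_comm) rfl rfl

theorem sum_range_gaussSumInvPow_sq_mul_pow [DecidableEq F] {a : F} (ha : a ≠ 0) :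
    ∑ j ∈ range (Fintype.card F - 1), gaussSumInvPow ω ψ j ^ 2 * ω a ^ j
      = ((Fintype.card F - 1 : ℕ) : R) * (kloostermanSum ψ a - 1) := by
  calc _ = ∑ j ∈ range (Fintype.card F - 1), ∑ x, ∑ y,
        ψ (x + y) * (ω (x * y) ^ (Fintype.card F - 1 - j) * ω a ^ j) := by
        refine sum_congr rfl fun j _ => ?_
        rw [gaussSumInvPow, sq, sum_mul_sum, sum_mul]
        refine sum_congr rfl fun x _ => ?_
        rw [sum_mul]
        refine sum_congr rfl fun y _ => ?_
        rw [AddChar.map_add_eq_mul, map_mul, mul_pow]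
        ring
    _ = ∑ x, ∑ y, ψ (x + y) *
        ∑ j ∈ range (Fintype.card F - 1), ω (x * y) ^ (Fintype.card F - 1 - j) * ω a ^ j := by
        simp_rw [mul_sum]
        rw [sum_comm]
        exact sum_congr rfl fun x _ => sum_comm
    _ = ∑ x, ∑ y, (if x * y = a then ((Fintype.card F - 1 : ℕ) : R) * ψ (x + y) else 0) := by
        simp_rw [sum_range_pow_sub_mul_pow hω ha, mul_ite, mul_zero, mul_comm]
    _ = ((Fintype.card F - 1 : ℕ) : R) * (kloostermanSum ψ a - 1) := by
        rw [FiniteField.sum_sum_ite_mul_eq ha, kloostermanSum, mul_sub, mul_sum, add_zero,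
          AddChar.map_zero_eq_one, mul_one]

theorem kloostermanSum_add_sum_gaussSumInvPow_sq_mul_pow (hψ : ψ ≠ 1) {a : F} (ha : a ≠ 0) :
    kloostermanSum ψ a +
        ∑ j ∈ Icc 1 (Fintype.card F - 2), gaussSumInvPow ω ψ j ^ 2 * ω a ^ j
      = (Fintype.card F : R) * (kloostermanSum ψ a - 1) := by
  classical
  have hq : 1 < Fintype.card F := Fintype.one_lt_card
  have hsplit := sum_range_eq_add_Ico (fun j => gaussSumInvPow ω ψ j ^ 2 * ω a ^ j)
    (Nat.sub_pos_of_lt hq)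
  rw [sum_range_gaussSumInvPow_sq_mul_pow hω ha, gaussSumInvPow_zero ω hψ,
    show Fintype.card F - 1 = Fintype.card F - 2 + 1 by omega, Ico_add_one_right_eq_Icc,
    ← show Fintype.card F - 1 = Fintype.card F - 2 + 1 by omega,
    Nat.cast_sub hq.le, Nat.cast_one] at hsplit
  linear_combination -hsplit

end FiniteField

/-- The paper's character `μ`. -/
noncomputable def traceAddChar (p : ℕ) [NeZero p] (F : Type*) [Field F] [Algebra (ZMod p) F]
    {R : Type*} [CommRing R] {ζ : R} (hζ : ζ ^ p = 1) : AddChar F R :=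
  (AddChar.zmodChar p hζ).compAddMonoidHom (Algebra.trace (ZMod p) F).toAddMonoidHom

section TraceAddChar

variable {p : ℕ} [NeZero p] {F R : Type} [Field F] [Fintype F] [Algebra (ZMod p) F]
  [CommRing R] {ζ : R} (hζ : ζ ^ p = 1)

theorem KloostermanR_eq_kloostermanSum (a : F) :
    KloostermanR p F R ζ a = kloostermanSum (traceAddChar p F hζ) a :=
  rfl

theorem gaussG_eq_neg_gaussSumInvPow (ω : F →*₀ R) (j : ℕ) :
    gaussG p F R ζ ω j = -gaussSumInvPow ω (traceAddChar p F hζ) j :=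
  rfl

end TraceAddChar

theorem traceAddChar_ne_one {p : ℕ} [Fact p.Prime] {F : Type*} [Field F] [Finite F]
    [Algebra (ZMod p) F] {R : Type*} [CommRing R] {ζ : R} (hζ : IsPrimitiveRoot ζ p) :
    traceAddChar p F hζ.pow_eq_one ≠ 1 := by
  have : FiniteDimensional (ZMod p) F := Module.Finite.of_finite
  obtain ⟨e, he⟩ := Algebra.trace_surjective (ZMod p) F 1
  refine AddChar.ne_one_iff.mpr ⟨e, fun h => one_ne_zero (α := ZMod p) ?_⟩
  rw [← he]
  exact ((AddChar.zmodChar_primitive_of_primitive_root p hζ).zmod_char_eq_one_iff p _).mp h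

theorem kloosterman_fourier_congruence_general (p n : ℕ) (hp : p.Prime)
    (F : Type) [Field F] [Fintype F] [Algebra (ZMod p) F]
    (hF : Fintype.card F = p ^ n)
    (R : Type) [CommRing R] [IsDomain R]
    (ζ : R) (hζ : IsPrimitiveRoot ζ p)
    (ω : F →*₀ R) (ρ : R →+* F) (hρω : ∀ x : F, ρ (ω x) = x)
    (a : F) :
    ((p ^ n : ℕ) : R) ∣
      KloostermanR p F R ζ a +
        ∑ j ∈ Icc 1 (p ^ n - 2), (gaussG p F R ζ ω j) ^ 2 * (ω a) ^ j := by
  have : Fact p.Prime := ⟨hp⟩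
  have hψ := traceAddChar_ne_one (F := F) hζ
  simp only [KloostermanR_eq_kloostermanSum hζ.pow_eq_one,
    gaussG_eq_neg_gaussSumInvPow hζ.pow_eq_one, neg_sq, ← hF]
  by_cases ha : a = 0
  · subst ha
    rw [kloostermanSum_zero hψ, zero_add, sum_eq_zero fun j hj => ?_]
    · exact dvd_zero _
    · rw [map_zero, zero_pow (Nat.one_le_iff_ne_zero.mp (mem_Icc.mp hj).1), mul_zero]
  · have hω : Function.Injective ω := Function.LeftInverse.injective hρω
    exact Dvd.intro _ (kloostermanSum_add_sum_gaussSumInvPow_sq_mul_pow hω hψ ha).symm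

/-- `K_q(a) ≡ -Σ_{j=1}^{q-2} g(j)² ω^j(a)  (mod q)` in the ring of integers of
`ℚ_p(ξ,ζ)`, modelled by the local ring `R` with residue map `ρ` onto `F_q`
and Teichmüller character `ω` (pinned down by `ρ ∘ ω = id`). -/
theorem kloosterman_fourier_congruence (p n : ℕ) (hp : p.Prime) (hodd : Odd p)
    (hn : 0 < n) (F : Type) [Field F] [Fintype F] [Algebra (ZMod p) F]
    (hF : Fintype.card F = p ^ n)
    (R : Type) [CommRing R] [IsDomain R]
    (ζ : R) (hζ : IsPrimitiveRoot ζ p)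
    (ω : F →*₀ R) (ρ : R →+* F) (hρω : ∀ x : F, ρ (ω x) = x)
    (hlocal : ∀ x : R, ρ x ≠ 0 → IsUnit x)
    (a : F) :
    ((p ^ n : ℕ) : R) ∣
      KloostermanR p F R ζ a +
        ∑ j ∈ Icc 1 (p ^ n - 2), (gaussG p F R ζ ω j) ^ 2 * (ω a) ^ j :=
  kloosterman_fourier_congruence_general p n hp F hF R ζ hζ ω ρ hρω a
end

section
/- For q = 3^n and a ∈ F_q, the identity Tr(a)·τ_X(a) = Tr(a) + 2·τ_Z(a) holds in F_3, where τ_X(a) = Σ_{r∈X} a^r with X = {r ∈ {0,…,q-2} : r = 3^i+3^j}, and τ_Z(a) = Σ_{r∈Z} a^r with Z = {r ∈ {0,…,q-2} : r = 2·3^i+3^j, i ≠ j}. -/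
open Finset

/-- `X = {r ∈ {0,…,q-2} : r ≡ 3^i + 3^j (mod q-1)}`, `i, j` not necessarily distinct. -/
def setX (n : ℕ) : Finset ℕ :=
  (range n ×ˢ range n).image (fun ij => (3 ^ ij.1 + 3 ^ ij.2) % (3 ^ n - 1))

/-- `Z = {r ∈ {0,…,q-2} : r ≡ 2·3^i + 3^j (mod q-1), i ≠ j}`. -/
def setZ (n : ℕ) : Finset ℕ :=
  ((range n ×ˢ range n).filter (fun ij => ij.1 ≠ ij.2)).image
    (fun ij => (2 * 3 ^ ij.1 + 3 ^ ij.2) % (3 ^ n - 1))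

/-! Write `T = Tr(a)` and `D = ∑ a^(2·3^i)`. In characteristic 3 with `a^(3^n) = a`, Frobenius
gives `T³ = T`. For `n ≥ 2` the exponents in `X` and `Z` never wrap around modulo `3^n - 1` and
distinct index pairs give distinct exponents (uniqueness of base-3 digits), so `τ_X` is the sum of
`a^(3^i) a^(3^j)` over unordered pairs and `τ_Z` the sum of `a^(2·3^i) a^(3^j)` over `i ≠ j`.
Expanding `T²` and `DT` then gives `2τ_X = T² + D` and `DT = τ_Z + T`, whence, as `2 = -1`,
`T τ_X = -T³ - DT = T + 2τ_Z`. -/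

section Sums

variable {ι M R : Type*}

lemma sum_product_filter_fst_eq_snd [AddCommMonoid M] [DecidableEq ι] (s : Finset ι)
    (g : ι × ι → M) : ∑ x ∈ s ×ˢ s with x.1 = x.2, g x = ∑ i ∈ s, g (i, i) := by
  rw [← diag_eq_filter, diag, sum_map]
  rfl

lemma sum_mul_sum_eq_sum_ne_add_sum [CommSemiring R] [DecidableEq ι] (s : Finset ι)
    (f g : ι → R) :
    (∑ i ∈ s, f i) * ∑ i ∈ s, g i =
      ∑ x ∈ s ×ˢ s with x.1 ≠ x.2, f x.1 * g x.2 + ∑ i ∈ s, f i * g i := by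
  rw [sum_mul_sum, ← sum_product', ← sum_filter_add_sum_filter_not _ fun x => x.1 ≠ x.2]
  simp only [ne_eq, not_not, sum_product_filter_fst_eq_snd]

lemma sq_sum_add_sum_sq [CommSemiring R] [LinearOrder ι] (s : Finset ι) (f : ι → R) :
    (∑ i ∈ s, f i) ^ 2 + ∑ i ∈ s, f i ^ 2 =
      2 * ∑ x ∈ s ×ˢ s with x.1 ≤ x.2, f x.1 * f x.2 := by
  have hswap : ∑ x ∈ s ×ˢ s with ¬x.1 ≤ x.2, f x.1 * f x.2 =
      ∑ x ∈ s ×ˢ s with x.1 < x.2, f x.1 * f x.2 :=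
    sum_equiv (Equiv.prodComm ι ι) (by simp [and_comm]) (fun _ _ => mul_comm _ _)
  have hle : ∑ x ∈ s ×ˢ s with x.1 ≤ x.2, f x.1 * f x.2 =
      ∑ x ∈ s ×ˢ s with x.1 < x.2, f x.1 * f x.2 + ∑ i ∈ s, f i ^ 2 := by
    have hlt : {x ∈ s ×ˢ s | x.1 ≤ x.2 ∧ x.1 < x.2} = {x ∈ s ×ˢ s | x.1 < x.2} :=
      filter_congr fun x _ => and_iff_right_of_imp le_of_lt
    have heq : {x ∈ s ×ˢ s | x.1 ≤ x.2 ∧ ¬x.1 < x.2} = {x ∈ s ×ˢ s | x.1 = x.2} :=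
      filter_congr fun x _ => by rw [not_lt, ← le_antisymm_iff]
    rw [← sum_filter_add_sum_filter_not _ fun x => x.1 < x.2, filter_filter, filter_filter, hlt,
      heq, sum_product_filter_fst_eq_snd]
    simp only [sq]
  rw [sq, sum_mul_sum, ← sum_product', ← sum_filter_add_sum_filter_not _ fun x => x.1 ≤ x.2,
    hswap, hle]
  ring

lemma sum_range_comp_succ_of_eq [AddCommMonoid M] {f : ℕ → M} {n : ℕ} (h : f n = f 0) :
    ∑ i ∈ range n, f (i + 1) = ∑ i ∈ range n, f i := by
  cases n with
  | zero => rfl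
  | succ m => rw [sum_range_succ, sum_range_succ', h, add_comm]

lemma sum_range_pow_pow_succ [Semiring R] {p n : ℕ} {a : R} (ha : a ^ p ^ n = a) :
    ∑ i ∈ range n, a ^ p ^ (i + 1) = ∑ i ∈ range n, a ^ p ^ i :=
  sum_range_comp_succ_of_eq (f := fun i => a ^ p ^ i) (by simpa using ha)

lemma sum_range_pow_pow_pow_char [CommSemiring R] {p n : ℕ} [ExpChar R p] {a : R}
    (ha : a ^ p ^ n = a) : (∑ i ∈ range n, a ^ p ^ i) ^ p = ∑ i ∈ range n, a ^ p ^ i := by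
  rw [sum_pow_char, ← sum_range_pow_pow_succ ha]
  simp only [← pow_mul, pow_succ]

end Sums

lemma three_mul_three_pow_le_of_lt {i j : ℕ} (h : i < j) : 3 * 3 ^ i ≤ 3 ^ j := by
  calc 3 * 3 ^ i = 3 ^ (i + 1) := (pow_succ' 3 i).symm
    _ ≤ 3 ^ j := Nat.pow_le_pow_right (by norm_num) h

lemma log_three_eq {s j : ℕ} (h₁ : 3 ^ j ≤ s) (h₂ : s < 3 * 3 ^ j) : Nat.log 3 s = j :=
  Nat.log_eq_of_pow_le_of_lt_pow h₁ (by rwa [pow_succ'])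

lemma log_three_three_pow_add_three_pow {i j : ℕ} (h : i ≤ j) :
    Nat.log 3 (3 ^ i + 3 ^ j) = j := by
  have : 3 ^ i ≤ 3 ^ j := Nat.pow_le_pow_right (by norm_num) h
  have : 0 < 3 ^ i := by positivity
  exact log_three_eq (by omega) (by omega)

lemma log_three_two_mul_three_pow_add_three_pow {i j : ℕ} (h : i ≠ j) :
    Nat.log 3 (2 * 3 ^ i + 3 ^ j) = max i j := by
  have : 0 < 3 ^ i := by positivity
  have : 0 < 3 ^ j := by positivity
  rcases h.lt_or_gt with h | h
  · have := three_mul_three_pow_le_of_lt h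
    rw [max_eq_right h.le]
    exact log_three_eq (by omega) (by omega)
  · have := three_mul_three_pow_le_of_lt h
    rw [max_eq_left h.le]
    exact log_three_eq (by omega) (by omega)

lemma three_pow_add_three_pow_inj {i j k l : ℕ} (hij : i ≤ j) (hkl : k ≤ l)
    (h : 3 ^ i + 3 ^ j = 3 ^ k + 3 ^ l) : i = k ∧ j = l := by
  have hjl : j = l := by
    rw [← log_three_three_pow_add_three_pow hij, h, log_three_three_pow_add_three_pow hkl]
  subst hjl
  exact ⟨by simpa using (by omega : 3 ^ i = 3 ^ k), rfl⟩

lemma two_mul_three_pow_add_three_pow_inj {i j k l : ℕ} (hij : i ≠ j) (hkl : k ≠ l)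
    (h : 2 * 3 ^ i + 3 ^ j = 2 * 3 ^ k + 3 ^ l) : i = k ∧ j = l := by
  have hmax : max i j = max k l := by
    rw [← log_three_two_mul_three_pow_add_three_pow hij, h,
      log_three_two_mul_three_pow_add_three_pow hkl]
  have hpos : ∀ m, 0 < 3 ^ m := fun m => by positivity
  rcases hij.lt_or_gt with hij | hij <;> rcases hkl.lt_or_gt with hkl | hkl
  · obtain rfl : j = l := by simpa [max_eq_right hij.le, max_eq_right hkl.le] using hmax
    exact ⟨by simpa using (by omega : 3 ^ i = 3 ^ k), rfl⟩
  · obtain rfl : j = k := by simpa [max_eq_right hij.le, max_eq_left hkl.le] using hmax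
    have := three_mul_three_pow_le_of_lt hij
    linarith [hpos i, hpos l]
  · obtain rfl : i = l := by simpa [max_eq_left hij.le, max_eq_right hkl.le] using hmax
    have := three_mul_three_pow_le_of_lt hkl
    linarith [hpos j, hpos k]
  · obtain rfl : i = k := by simpa [max_eq_left hij.le, max_eq_left hkl.le] using hmax
    exact ⟨rfl, by simpa using (by omega : 3 ^ j = 3 ^ l)⟩

lemma three_pow_add_three_pow_lt {n i j : ℕ} (hn : 2 ≤ n) (hi : i < n) (hj : j < n) :
    3 ^ i + 3 ^ j < 3 ^ n - 1 := by
  have := three_mul_three_pow_le_of_lt hi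
  have := three_mul_three_pow_le_of_lt hj
  have : 3 ^ 2 ≤ 3 ^ n := Nat.pow_le_pow_right (by norm_num) hn
  omega

lemma two_mul_three_pow_add_three_pow_lt {n i j : ℕ} (hi : i < n) (hj : j < n) (hij : i ≠ j) :
    2 * 3 ^ i + 3 ^ j < 3 ^ n - 1 := by
  have := three_mul_three_pow_le_of_lt hi
  have := three_mul_three_pow_le_of_lt hj
  have : 0 < 3 ^ i := by positivity
  have : 0 < 3 ^ j := by positivity
  rcases hij.lt_or_gt with h | h <;> have := three_mul_three_pow_le_of_lt h <;> omega

lemma setX_eq_image {n : ℕ} (hn : 2 ≤ n) :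
    setX n = {ij ∈ range n ×ˢ range n | ij.1 ≤ ij.2}.image fun ij => 3 ^ ij.1 + 3 ^ ij.2 := by
  ext r
  simp only [setX, mem_image, mem_filter, mem_product, mem_range, Prod.exists]
  constructor
  · rintro ⟨i, j, ⟨hi, hj⟩, rfl⟩
    rw [Nat.mod_eq_of_lt (three_pow_add_three_pow_lt hn hi hj)]
    rcases le_total i j with h | h
    · exact ⟨i, j, ⟨⟨hi, hj⟩, h⟩, rfl⟩
    · exact ⟨j, i, ⟨⟨hj, hi⟩, h⟩, add_comm _ _⟩
  · rintro ⟨i, j, ⟨⟨hi, hj⟩, -⟩, rfl⟩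
    exact ⟨i, j, ⟨hi, hj⟩, Nat.mod_eq_of_lt (three_pow_add_three_pow_lt hn hi hj)⟩

lemma setZ_eq_image (n : ℕ) :
    setZ n = {ij ∈ range n ×ˢ range n | ij.1 ≠ ij.2}.image fun ij => 2 * 3 ^ ij.1 + 3 ^ ij.2 := by
  refine image_congr fun ij hij => ?_
  simp only [coe_filter, mem_product, mem_range, Set.mem_ofPred_eq] at hij
  exact Nat.mod_eq_of_lt (two_mul_three_pow_add_three_pow_lt hij.1.1 hij.1.2 hij.2)

lemma sum_setX {M : Type*} [AddCommMonoid M] {n : ℕ} (hn : 2 ≤ n) (g : ℕ → M) :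
    ∑ r ∈ setX n, g r = ∑ ij ∈ range n ×ˢ range n with ij.1 ≤ ij.2, g (3 ^ ij.1 + 3 ^ ij.2) := by
  rw [setX_eq_image hn, sum_image]
  rintro ⟨i, j⟩ hij ⟨k, l⟩ hkl h
  obtain ⟨rfl, rfl⟩ := three_pow_add_three_pow_inj (mem_filter.1 hij).2 (mem_filter.1 hkl).2 h
  rfl

lemma sum_setZ {M : Type*} [AddCommMonoid M] (n : ℕ) (g : ℕ → M) :
    ∑ r ∈ setZ n, g r =
      ∑ ij ∈ range n ×ˢ range n with ij.1 ≠ ij.2, g (2 * 3 ^ ij.1 + 3 ^ ij.2) := by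
  rw [setZ_eq_image, sum_image]
  rintro ⟨i, j⟩ hij ⟨k, l⟩ hkl h
  obtain ⟨rfl, rfl⟩ :=
    two_mul_three_pow_add_three_pow_inj (mem_filter.1 hij).2 (mem_filter.1 hkl).2 h
  rfl


theorem trace_mul_sum_setX_of_pow_eq_self {R : Type*} [CommRing R] [CharP R 3] {n : ℕ}
    (hn : 2 ≤ n) {a : R} (ha : a ^ 3 ^ n = a) :
    (∑ i ∈ range n, a ^ (3 ^ i)) * (∑ r ∈ setX n, a ^ r) =
      (∑ i ∈ range n, a ^ (3 ^ i)) + 2 * ∑ r ∈ setZ n, a ^ r := by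
  set T := ∑ i ∈ range n, a ^ (3 ^ i)
  set D := ∑ i ∈ range n, a ^ (2 * 3 ^ i)
  have hT : T ^ 3 = T := sum_range_pow_pow_pow_char ha
  have hX : 2 * ∑ r ∈ setX n, a ^ r = T ^ 2 + D := by
    rw [sum_setX hn]
    simp only [pow_add]
    rw [← sq_sum_add_sum_sq (range n) fun i => a ^ 3 ^ i]
    simp only [T, D, ← pow_mul, mul_comm]
  have hZ : D * T = ∑ r ∈ setZ n, a ^ r + T := by
    have hdiag (i : ℕ) : a ^ (2 * 3 ^ i) * a ^ 3 ^ i = a ^ 3 ^ (i + 1) := by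
      rw [← pow_add, pow_succ]
      congr 1
      ring
    rw [sum_mul_sum_eq_sum_ne_add_sum, sum_setZ, sum_congr rfl fun i _ => hdiag i,
      sum_range_pow_pow_succ ha]
    simp only [pow_add, T]
  have h3 : (3 : R) = 0 := CharP.cast_eq_zero R 3
  linear_combination 2 * T * hX + 2 * hT + 2 * hZ + (T - T * ∑ r ∈ setX n, a ^ r) * h3

/-- The identity `Tr(a)·τ_X(a) = Tr(a) + 2·τ_Z(a)` in `F_3` (all terms lie in the
prime field; the identity is stated inside `F_{3^n}`). -/
theorem trace_mul_tauX (n : ℕ) (hn : 1 ≤ n)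
    (F : Type) [Field F] [Fintype F] (hF : Fintype.card F = 3 ^ n) (a : F) :
    (∑ i ∈ range n, a ^ (3 ^ i)) * (∑ r ∈ setX n, a ^ r) =
      (∑ i ∈ range n, a ^ (3 ^ i)) + 2 * ∑ r ∈ setZ n, a ^ r := by
  have : CharP F 3 := charP_of_card_eq_prime_pow hF
  obtain rfl | hn := hn.eq_or_lt
  · simp [show setX 1 = {0} by decide, show setZ 1 = ∅ by decide]
  · exact trace_mul_sum_setX_of_pow_eq_self hn (hF ▸ FiniteField.pow_card a)
end

section
/- Let p be an odd prime, q = p^n, a ∈ F_q, and let m_a(x) be the minimal polynomial of K_q(a) over ℚ, of degree t. Then m_a(x) ≡ x^t (mod p), i.e., every coefficient of m_a other than the leading one is divisible by p. -/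
open Finset Polynomial

/-- The Kloosterman sum `K_q(a) = Σ_{x ∈ F_q} ζ^{Tr(x⁻¹ + a x)}` (with `0⁻¹ = 0`). -/
noncomputable def Kloosterman (p : ℕ) (F : Type) [Field F] [Fintype F]
    [Algebra (ZMod p) F] (ζ : ℂ) (a : F) : ℂ :=
  ∑ x : F, ζ ^ (Algebra.trace (ZMod p) F (x⁻¹ + a * x)).val

/-!
Write `K_q(a) = P(ζ)` with `P = Σ_x X ^ Tr(x⁻¹ + a x) ∈ ℤ[X]`, so that `P(1) = q ≡ 0 mod p`.
Every root of the minimal polynomial of `P(ζ)` is a Galois conjugate `P(ζ ^ i)`. It lies in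
`ℤ[ζ]` and is killed by the ring map `ℤ[ζ] → 𝔽_p`, `ζ ↦ 1`, which exists because
`Φ_p(1) = p`. So the minimal polynomial over `ℤ`, which splits over `ℤ[ζ]` into factors
`X - P(ζ ^ i)`, reduces to `X ^ t` modulo `p`.
-/

theorem IsIntegral.aeval {R A : Type*} [CommRing R] [CommRing A] [Algebra R A] {x : A}
    (hx : IsIntegral R x) (P : R[X]) : IsIntegral R (aeval x P) :=
  adjoin_le_integralClosure hx (aeval_mem_adjoin_singleton R x)

theorem Polynomial.Monic.map_eq_X_pow_of_roots_lift_to_ker {R A B T : Type*} [CommRing R]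
    [CommRing A] [CommRing B] [IsDomain B] [CommRing T] [Algebra R A] [Algebra A B]
    [Algebra R B] [IsScalarTower R A B] (hinj : Function.Injective (algebraMap A B))
    (g : A →+* T) {f : R[X]} (hf : f.Monic) (hsplit : (f.map (algebraMap R B)).Splits)
    (hroots : ∀ r : B, aeval r f = 0 → ∃ ρ : A, algebraMap A B ρ = r ∧ g ρ = 0) :
    f.map (g.comp (algebraMap R A)) = X ^ f.natDegree := by
  set fB := f.map (algebraMap R B) with hfB
  have hroots' : ∀ r ∈ fB.roots, ∃ ρ : A, algebraMap A B ρ = r ∧ g ρ = 0 := fun r hr ↦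
    hroots r (by rw [aeval_def, eval₂_eq_eval_map]; exact isRoot_of_mem_roots hr)
  choose! lift hlift hker using hroots'
  have hfA : f.map (algebraMap R A) = (fB.roots.map fun r ↦ X - C (lift r)).prod := by
    apply map_injective _ hinj
    rw [map_map, ← IsScalarTower.algebraMap_eq, ← hfB, Polynomial.map_multiset_prod,
      Multiset.map_map]
    conv_lhs => rw [hsplit.eq_prod_roots_of_monic (hf.map _)]
    refine congrArg _ (Multiset.map_congr rfl fun r hr ↦ ?_)
    simp [hlift r hr]
  calc f.map (g.comp (algebraMap R A)) = (f.map (algebraMap R A)).map g := (map_map ..).symm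
    _ = (fB.roots.map fun _ ↦ X).prod := by
      rw [hfA, Polynomial.map_multiset_prod, Multiset.map_map]
      refine congrArg _ (Multiset.map_congr rfl fun r hr ↦ ?_)
      simp [hker r hr]
    _ = X ^ f.natDegree := by
      rw [Multiset.map_const', Multiset.prod_replicate, ← hsplit.natDegree_eq_card_roots,
        hf.natDegree_map]

theorem Algebra.exists_algHom_adjoin_singleton {R S T : Type*} [CommRing R] [IsDomain R]
    [IsIntegrallyClosed R] [CommRing S] [IsDomain S] [Algebra R S] [Module.IsTorsionFree R S]
    [CommRing T] [Algebra R T] {x : S} (hx : IsIntegral R x) {t : T}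
    (ht : aeval t (minpoly R x) = 0) :
    ∃ g : Algebra.adjoin R {x} →ₐ[R] T, g ⟨x, Algebra.self_mem_adjoin_singleton R x⟩ = t := by
  have ht' : (minpoly R x).eval₂ (Algebra.ofId R T : R →+* T) t = 0 := ht
  refine ⟨(AdjoinRoot.liftAlgHom _ (Algebra.ofId R T) t ht').comp
    (minpoly.equivAdjoin hx).symm.toAlgHom, ?_⟩
  have : (minpoly.equivAdjoin hx).symm ⟨x, Algebra.self_mem_adjoin_singleton R x⟩ =
      AdjoinRoot.root (minpoly R x) := by
    rw [AlgEquiv.symm_apply_eq, ← AdjoinRoot.mk_X]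
    exact Subtype.ext (AdjoinRoot.Minpoly.coe_toAdjoin_mk_X).symm
  change AdjoinRoot.liftAlgHom _ _ t ht' ((minpoly.equivAdjoin hx).symm _) = t
  rw [this, AdjoinRoot.liftAlgHom_root]

theorem IsPrimitiveRoot.exists_eq_aeval_pow_of_aeval_minpoly_eq_zero {K : Type*} [Field K]
    [CharZero K] [IsAlgClosed K] {ζ : K} {n : ℕ} [NeZero n] (hζ : IsPrimitiveRoot ζ n)
    (P : ℤ[X]) {r : K} (hr : aeval r (minpoly ℚ (aeval ζ P)) = 0) :
    ∃ i, r = aeval (ζ ^ i) P := by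
  let L := IntermediateField.adjoin ℚ {ζ}
  have : FiniteDimensional ℚ L :=
    IntermediateField.adjoin.finiteDimensional (hζ.isIntegral (NeZero.pos n)).tower_top
  let ζL : L := IntermediateField.AdjoinSimple.gen ℚ ζ
  have hr' : aeval r (minpoly ℚ (aeval ζL P)) = 0 := by
    rwa [← minpoly.algebraMap_eq (algebraMap L K).injective, ← aeval_algebraMap_apply]
  obtain ⟨φ, hφ⟩ := IntermediateField.exists_algHom_of_splits_of_aeval
    (fun s ↦ ⟨IsIntegral.of_finite ℚ s, IsAlgClosed.splits _⟩) hr'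
  obtain ⟨i, -, hi⟩ := hζ.eq_pow_of_pow_eq_one (ξ := φ ζL) <| by
    rw [← map_pow, show ζL ^ n = 1 from Subtype.ext hζ.pow_eq_one, map_one]
  exact ⟨i, by rw [← hφ, hi]; exact (aeval_algHom_apply (φ.restrictScalars ℤ) ζL P).symm⟩

theorem IsPrimitiveRoot.minpoly_aeval_map_eq_X_pow {K : Type*} [Field K] [CharZero K]
    [IsAlgClosed K] {p k : ℕ} [Fact p.Prime] {ζ : K} (hζ : IsPrimitiveRoot ζ (p ^ (k + 1)))
    (P : ℤ[X]) (hP : ((P.eval 1 : ℤ) : ZMod p) = 0) :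
    (minpoly ℤ (aeval ζ P)).map (Int.castRingHom (ZMod p)) =
      X ^ (minpoly ℤ (aeval ζ P)).natDegree := by
  have hζint : IsIntegral ℤ ζ := hζ.isIntegral (NeZero.pos _)
  have hPint := hζint.aeval P
  let ζO : Algebra.adjoin ℤ {ζ} := ⟨ζ, Algebra.self_mem_adjoin_singleton ℤ ζ⟩
  obtain ⟨g, hg⟩ := Algebra.exists_algHom_adjoin_singleton hζint (t := (1 : ZMod p)) <| by
    rw [← cyclotomic_eq_minpoly hζ (NeZero.pos _), aeval_def, eval₂_one_cyclotomic_prime_pow,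
      ZMod.natCast_self]
  rw [show Int.castRingHom (ZMod p) = g.toRingHom.comp (algebraMap ℤ (Algebra.adjoin ℤ {ζ}))
    from RingHom.ext_int _ _]
  refine (minpoly.monic hPint).map_eq_X_pow_of_roots_lift_to_ker Subtype.val_injective _
    (IsAlgClosed.splits _) fun r hr ↦ ?_
  obtain ⟨i, rfl⟩ := hζ.exists_eq_aeval_pow_of_aeval_minpoly_eq_zero P <| by
    rwa [minpoly.isIntegrallyClosed_eq_field_fractions' ℚ hPint, aeval_map_algebraMap]
  refine ⟨aeval (ζO ^ i) P, (aeval_algebraMap_apply K (ζO ^ i) P).symm, ?_⟩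
  change g (aeval (ζO ^ i) P) = 0
  rw [← aeval_algHom_apply, map_pow, hg, one_pow, aeval_def, eval₂_at_one]
  exact hP

theorem Polynomial.natCast_dvd_coeff_of_map_eq_X_pow {n : ℕ} {f : ℤ[X]}
    (hf : f.map (Int.castRingHom (ZMod n)) = X ^ f.natDegree) {k : ℕ} (hk : k < f.natDegree) :
    (n : ℤ) ∣ f.coeff k := by
  rw [← ZMod.intCast_zmod_eq_zero_iff_dvd]
  simpa [hk.ne] using congrArg (coeff · k) hf

section KloostermanPoly

variable (p : ℕ) (F : Type) [Field F] [Fintype F] [Algebra (ZMod p) F] (a : F)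

noncomputable def kloostermanPoly : ℤ[X] :=
  ∑ x : F, X ^ (Algebra.trace (ZMod p) F (x⁻¹ + a * x)).val

theorem aeval_kloostermanPoly (ζ : ℂ) :
    aeval ζ (kloostermanPoly p F a) = Kloosterman p F ζ a := by
  simp [kloostermanPoly, Kloosterman]

theorem eval_one_kloostermanPoly : (kloostermanPoly p F a).eval 1 = Fintype.card F := by
  simp [kloostermanPoly, eval_finsetSum]

end KloostermanPoly

theorem minpoly_kloosterman_mod_p_general (p n : ℕ) (hp : p.Prime)
    (hn : 0 < n) (F : Type) [Field F] [Fintype F] [Algebra (ZMod p) F]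
    (hF : Fintype.card F = p ^ n)
    (ζ : ℂ) (hζ : IsPrimitiveRoot ζ p) (a : F) :
    ∀ k < (minpoly ℚ (Kloosterman p F ζ a)).natDegree,
      ∃ c : ℤ, (minpoly ℚ (Kloosterman p F ζ a)).coeff k = (c : ℚ) ∧ (p : ℤ) ∣ c := by
  have : Fact p.Prime := ⟨hp⟩
  have hint : IsIntegral ℤ (Kloosterman p F ζ a) :=
    aeval_kloostermanPoly p F a ζ ▸ (hζ.isIntegral hp.pos).aeval _
  have hζ' : IsPrimitiveRoot ζ (p ^ (0 + 1)) := by rwa [zero_add, pow_one]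
  have hred := hζ'.minpoly_aeval_map_eq_X_pow (kloostermanPoly p F a)
    (by simp [eval_one_kloostermanPoly, hF, hn.ne'])
  rw [aeval_kloostermanPoly] at hred
  rw [minpoly.isIntegrallyClosed_eq_field_fractions' ℚ hint, (minpoly.monic hint).natDegree_map]
  exact fun k hk ↦ ⟨_, coeff_map .., natCast_dvd_coeff_of_map_eq_X_pow hred hk⟩

/-- Every coefficient of the minimal polynomial of `K_q(a)` over `ℚ`, other than
the leading one, is an integer divisible by `p`; i.e. `m_a(x) ≡ x^t (mod p)`. -/
theorem minpoly_kloosterman_mod_p (p n : ℕ) (hp : p.Prime) (hodd : Odd p)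
    (hn : 0 < n) (F : Type) [Field F] [Fintype F] [Algebra (ZMod p) F]
    (hF : Fintype.card F = p ^ n)
    (ζ : ℂ) (hζ : IsPrimitiveRoot ζ p) (a : F) :
    ∀ k < (minpoly ℚ (Kloosterman p F ζ a)).natDegree,
      ∃ c : ℤ, (minpoly ℚ (Kloosterman p F ζ a)).coeff k = (c : ℚ) ∧ (p : ℤ) ∣ c :=
  minpoly_kloosterman_mod_p_general p n hp hn F hF ζ hζ a
end
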